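/- arXiv:2302.01798 — 2 statements merged into one kernel-verified Lean document; each statement's English description precedes it below -/
import Mathlib

section
/- Let N be a positive integer and let x, x̃ : Fin N → ℝ^{d₀} and y, ỹ : Fin N → ℝ^{d_n} be aligned source and target datasets satisfying ‖x̃_i − x_i‖ ≤ ε_data and ‖ỹ_i − y_i‖ ≤ ε_data for all i (data deviation ε_data ≥ 0). Let F₀ : ℝ^{d₀} → ℝ^{m} be Lipschitz with constant C₀ and F₀(0) = 0, let F : ℝ^{m} → ℝ^{d_n} be Lipschitz with constant C_F, and let δF : ℝ^{m} → ℝ^{d_n} be Lipschitz with constant C_{δF} ≤ ε_data and δF(0) = 0. Suppose the pretrained network f = F ∘ F₀ is well-trained on the source data within error ε_pretrained, i.e. (1/N) ∑_{i=1}^N ‖F(F₀(x_i)) − y_i‖² ≤ ε_pretrained². Let C_x̃ ≥ 0 satisfy ‖x̃_i‖ ≤ C_x̃ for all i. Then the finetuned network g = (F + δF) ∘ F₀ has bounded loss on the target data: (1/N) ∑_{i=1}^N ‖F(F₀(x̃_i)) + δF(F₀(x̃_i)) − ỹ_i‖² ≤ 3 ε_pretrained² + 3 (1 + 2 C₀²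 C_x̃² + 2 C_F² C₀²) ε_data². -/

private lemma sq_le_of_le_mul {c p a b : ℝ} (hp : 0 ≤ p) (h : p ≤ a * b)
    (hb0 : 0 ≤ b) (hb : b ≤ c) : p ^ 2 ≤ a ^ 2 * c ^ 2 := by
  have h1 : p ^ 2 ≤ (a * b) ^ 2 := by
    rw [sq, sq]; exact mul_self_le_mul_self hp h
  have h2 : b ^ 2 ≤ c ^ 2 := by
    rw [sq, sq]; exact mul_self_le_mul_self hb0 hb
  calc p ^ 2 ≤ (a * b) ^ 2 := h1
    _ = a ^ 2 * b ^ 2 := by ring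
    _ ≤ a ^ 2 * c ^ 2 := mul_le_mul_of_nonneg_left h2 (sq_nonneg a)

private lemma sq3_lemma {s na nb nc β γ : ℝ} (h : s ≤ na + nb + nc)
    (hs : 0 ≤ s) (hb : nb ^ 2 ≤ β) (hc : nc ^ 2 ≤ γ) :
    s ^ 2 ≤ 3 * na ^ 2 + 3 * β + 3 * γ := by
  nlinarith [sq_nonneg (na - nb), sq_nonneg (na - nc), sq_nonneg (nb - nc)]

set_option maxHeartbeats 1000000 in
/-- **Finetuned loss bounded by pretrain loss and data deviation.**
If the aligned datasets deviate by at most `εdata`, the fixed layers `F₀` are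
Lipschitz with constant `C₀` and `F₀ 0 = 0`, the finetuned layers `F` are
Lipschitz with constant `CF`, the layer variation `δF` is Lipschitz with
constant `CδF ≤ εdata` and `δF 0 = 0`, and the pretrained net `f = F ∘ F₀`
is well-trained on the source data within error `εpre`, then the finetuned
net `g = (F + δF) ∘ F₀` has loss on the target data bounded by
`3 εpre² + 3 (1 + 2 C₀² Cxt² + 2 CF² C₀²) εdata²`. -/
theorem finetuned_loss_bound
    {d₀ m dₙ N : ℕ} (hN : 0 < N)
    (x xt : Fin N → EuclideanSpace ℝ (Fin d₀))
    (y yt : Fin N → EuclideanSpace ℝ (Fin dₙ))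
    (εdata εpre : ℝ) (hεdata : 0 ≤ εdata)
    (hx : ∀ i, ‖xt i - x i‖ ≤ εdata)
    (hy : ∀ i, ‖yt i - y i‖ ≤ εdata)
    (F₀ : EuclideanSpace ℝ (Fin d₀) → EuclideanSpace ℝ (Fin m))
    (F δF : EuclideanSpace ℝ (Fin m) → EuclideanSpace ℝ (Fin dₙ))
    (C₀ CF CδF Cxt : ℝ)
    (hF₀ : ∀ a b, ‖F₀ a - F₀ b‖ ≤ C₀ * ‖a - b‖)
    (hF₀0 : F₀ 0 = 0)
    (hF : ∀ a b, ‖F a - F b‖ ≤ CF * ‖a - b‖)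
    (hδF : ∀ a b, ‖δF a - δF b‖ ≤ CδF * ‖a - b‖)
    (hδF0 : δF 0 = 0)
    (hCδF : CδF ≤ εdata)
    (hpre : (1 / N : ℝ) * ∑ i, ‖F (F₀ (x i)) - y i‖ ^ 2 ≤ εpre ^ 2)
    (hCxt : 0 ≤ Cxt)
    (hxt : ∀ i, ‖xt i‖ ≤ Cxt) :
    (1 / N : ℝ) * ∑ i, ‖F (F₀ (xt i)) + δF (F₀ (xt i)) - yt i‖ ^ 2 ≤
      3 * εpre ^ 2 + 3 * (1 + 2 * C₀ ^ 2 * Cxt ^ 2 + 2 * CF ^ 2 * C₀ ^ 2) * εdata ^ 2 := by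
  have hNpos : (0:ℝ) < N := by exact_mod_cast hN
  set K : ℝ := 1 + 2 * C₀ ^ 2 * Cxt ^ 2 + 2 * CF ^ 2 * C₀ ^ 2 with hKdef
  have key : ∀ i, ‖F (F₀ (xt i)) + δF (F₀ (xt i)) - yt i‖ ^ 2 ≤
      3 * ‖F (F₀ (x i)) - y i‖ ^ 2 + 3 * K * εdata ^ 2 := by
    intro i
    have hp : ‖F₀ (xt i)‖ ^ 2 ≤ C₀ ^ 2 * Cxt ^ 2 := by
      have h1 : ‖F₀ (xt i)‖ ≤ C₀ * ‖xt i‖ := by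
        simpa [hF₀0] using hF₀ (xt i) 0
      exact sq_le_of_le_mul (norm_nonneg _) h1 (norm_nonneg _) (hxt i)
    have hq : ‖F₀ (xt i) - F₀ (x i)‖ ^ 2 ≤ C₀ ^ 2 * εdata ^ 2 :=
      sq_le_of_le_mul (norm_nonneg _) (hF₀ (xt i) (x i)) (norm_nonneg _) (hx i)
    have hb : ‖δF (F₀ (xt i))‖ ^ 2 ≤ εdata ^ 2 * (C₀ ^ 2 * Cxt ^ 2) := by
      have h1 : ‖δF (F₀ (xt i))‖ ≤ CδF * ‖F₀ (xt i)‖ := by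
        simpa [hδF0] using hδF (F₀ (xt i)) 0
      have h2 : ‖δF (F₀ (xt i))‖ ≤ εdata * ‖F₀ (xt i)‖ := by
        have := norm_nonneg (F₀ (xt i)); nlinarith
      nlinarith [sq_le_of_le_mul (norm_nonneg (δF (F₀ (xt i)))) h2
        (norm_nonneg (F₀ (xt i))) (le_refl ‖F₀ (xt i)‖), sq_nonneg εdata, hp,
        norm_nonneg (δF (F₀ (xt i)))]
    have hc : ‖F (F₀ (xt i)) - F (F₀ (x i))‖ ^ 2 ≤ CF ^ 2 * (C₀ ^ 2 * εdata ^ 2) := by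
      nlinarith [sq_le_of_le_mul (norm_nonneg (F (F₀ (xt i)) - F (F₀ (x i))))
        (hF (F₀ (xt i)) (F₀ (x i))) (norm_nonneg (F₀ (xt i) - F₀ (x i)))
        (le_refl ‖F₀ (xt i) - F₀ (x i)‖), sq_nonneg CF, hq]
    have hbc : ‖δF (F₀ (xt i)) + (F (F₀ (xt i)) - F (F₀ (x i)))‖ ^ 2 ≤
        2 * C₀ ^ 2 * Cxt ^ 2 * εdata ^ 2 + 2 * CF ^ 2 * C₀ ^ 2 * εdata ^ 2 := by
      have h1 := norm_add_le (δF (F₀ (xt i))) (F (F₀ (xt i)) - F (F₀ (x i)))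
      nlinarith [hb, hc, norm_nonneg (δF (F₀ (xt i))),
        norm_nonneg (F (F₀ (xt i)) - F (F₀ (x i))),
        norm_nonneg (δF (F₀ (xt i)) + (F (F₀ (xt i)) - F (F₀ (x i)))),
        sq_nonneg (‖δF (F₀ (xt i))‖ - ‖F (F₀ (xt i)) - F (F₀ (x i))‖)]
    have hd : ‖y i - yt i‖ ^ 2 ≤ εdata ^ 2 := by
      have h1 : ‖y i - yt i‖ ≤ εdata := by
        rw [← norm_neg]; simpa using hy i
      nlinarith [norm_nonneg (y i - yt i)]
    have hsplit : F (F₀ (xt i)) + δF (F₀ (xt i)) - yt i =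
        (F (F₀ (x i)) - y i) + (δF (F₀ (xt i)) + (F (F₀ (xt i)) - F (F₀ (x i))))
          + (y i - yt i) := by abel
    have h3 : ‖F (F₀ (xt i)) + δF (F₀ (xt i)) - yt i‖ ≤
        ‖F (F₀ (x i)) - y i‖ + ‖δF (F₀ (xt i)) + (F (F₀ (xt i)) - F (F₀ (x i)))‖
          + ‖y i - yt i‖ := by
      rw [hsplit]; exact norm_add₃_le
    have := sq3_lemma h3 (norm_nonneg _) hbc hd
    rw [hKdef]; linarith
  have hsum : ∑ i, ‖F (F₀ (xt i)) + δF (F₀ (xt i)) - yt i‖ ^ 2 ≤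
      3 * (∑ i, ‖F (F₀ (x i)) - y i‖ ^ 2) + N * (3 * K * εdata ^ 2) := by
    calc ∑ i, ‖F (F₀ (xt i)) + δF (F₀ (xt i)) - yt i‖ ^ 2
        ≤ ∑ i, (3 * ‖F (F₀ (x i)) - y i‖ ^ 2 + 3 * K * εdata ^ 2) :=
          Finset.sum_le_sum fun i _ => key i
      _ = 3 * (∑ i, ‖F (F₀ (x i)) - y i‖ ^ 2) + N * (3 * K * εdata ^ 2) := by
          rw [Finset.sum_add_distrib, ← Finset.mul_sum, Finset.sum_const,
            Finset.card_univ, Fintype.card_fin, nsmul_eq_mul]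
  have hmul : (1 / N : ℝ) * ∑ i, ‖F (F₀ (xt i)) + δF (F₀ (xt i)) - yt i‖ ^ 2 ≤
      (1 / N : ℝ) * (3 * (∑ i, ‖F (F₀ (x i)) - y i‖ ^ 2) + N * (3 * K * εdata ^ 2)) :=
    mul_le_mul_of_nonneg_left hsum (by positivity)
  have hrw : (1 / N : ℝ) * (3 * (∑ i, ‖F (F₀ (x i)) - y i‖ ^ 2) + N * (3 * K * εdata ^ 2))
      = 3 * ((1 / N : ℝ) * ∑ i, ‖F (F₀ (x i)) - y i‖ ^ 2) + 3 * K * εdata ^ 2 := by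
    field_simp
  rw [hrw] at hmul
  have h9 : 3 * ((1 / N : ℝ) * ∑ i, ‖F (F₀ (x i)) - y i‖ ^ 2) ≤ 3 * εpre ^ 2 := by
    linarith
  calc (1 / N : ℝ) * ∑ i, ‖F (F₀ (xt i)) + δF (F₀ (xt i)) - yt i‖ ^ 2
      ≤ 3 * ((1 / N : ℝ) * ∑ i, ‖F (F₀ (x i)) - y i‖ ^ 2) + 3 * K * εdata ^ 2 := hmul
    _ ≤ 3 * εpre ^ 2 + 3 * K * εdata ^ 2 := by linarith
end

section
/- Let g : ℝ^{d₀} → ℝ^{d_n} be Lipschitz with constant C_g. Let x̃, ỹ : Fin N → ℝ^{d₀} × ℝ^{d_n} be an adaptation dataset (N samples x̃_i with labels ỹ_i) and let x̃ᵗ, ỹᵗ : Fin N_test → ℝ^{d₀} × ℝ^{d_n} be a test dataset with N_test ≤ N. Suppose there is an injective alignment map j : Fin N_test → Fin N such that ‖x̃ᵗ_i − x̃_{j(i)}‖ ≤ ε_test and ‖ỹᵗ_i − ỹ_{j(i)}‖ ≤ ε_test for all i. Then the generalization error of g is bounded: (1/N_test) ∑_{i=1}^{N_test} ‖g(x̃ᵗ_i)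 − ỹᵗ_i‖² ≤ 3 (C_g² + 1) ε_test² + (3 N / N_test) · (1/N) ∑_{i=1}^{N} ‖g(x̃_i) − ỹ_i‖². -/
set_option maxHeartbeats 1000000


/-- **Generalization error bound.** If `g` is Lipschitz with constant `Cg`, the
test dataset `(xtest, ytest)` of size `Ntest ≤ N` is aligned to the adaptation
dataset `(xt, yt)` of size `N` by an injective map `j` with deviation `εtest`,
then the test loss of `g` is bounded by
`3 (Cg² + 1) εtest² + (3 N / Ntest) · L(g)` where `L(g)` is the adaptation loss. -/
theorem generalization_error_bound
    {d₀ dₙ N Ntest : ℕ} (hN : 0 < N) (hNtest : 0 < Ntest) (hle : Ntest ≤ N)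
    (g : EuclideanSpace ℝ (Fin d₀) → EuclideanSpace ℝ (Fin dₙ))
    (Cg : ℝ)
    (hg : ∀ a b, ‖g a - g b‖ ≤ Cg * ‖a - b‖)
    (xt : Fin N → EuclideanSpace ℝ (Fin d₀))
    (yt : Fin N → EuclideanSpace ℝ (Fin dₙ))
    (xtest : Fin Ntest → EuclideanSpace ℝ (Fin d₀))
    (ytest : Fin Ntest → EuclideanSpace ℝ (Fin dₙ))
    (j : Fin Ntest → Fin N) (hj : Function.Injective j)
    (εtest : ℝ)
    (hxtest : ∀ i, ‖xtest i - xt (j i)‖ ≤ εtest)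
    (hytest : ∀ i, ‖ytest i - yt (j i)‖ ≤ εtest) :
    (1 / Ntest : ℝ) * ∑ i, ‖g (xtest i) - ytest i‖ ^ 2 ≤
      3 * (Cg ^ 2 + 1) * εtest ^ 2 +
        (3 * N / Ntest : ℝ) * ((1 / N : ℝ) * ∑ i, ‖g (xt i) - yt i‖ ^ 2) := by
  have hNt : (0:ℝ) < Ntest := by exact_mod_cast hNtest
  have hNr : (0:ℝ) < N := by exact_mod_cast hN
  -- pointwise bound
  have key : ∀ i : Fin Ntest, ‖g (xtest i) - ytest i‖ ^ 2 ≤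
      3 * (Cg ^ 2 + 1) * εtest ^ 2 + 3 * ‖g (xt (j i)) - yt (j i)‖ ^ 2 := by
    intro i
    have ha := hg (xtest i) (xt (j i))
    have hx := hxtest i
    have hy := hytest i
    have hε : 0 ≤ εtest := le_trans (norm_nonneg _) hx
    have hdecomp : g (xtest i) - ytest i =
        (g (xtest i) - g (xt (j i))) + (g (xt (j i)) - yt (j i)) + (yt (j i) - ytest i) := by
      abel
    have htri : ‖g (xtest i) - ytest i‖ ≤
        ‖g (xtest i) - g (xt (j i))‖ + ‖g (xt (j i)) - yt (j i)‖ + ‖yt (j i) - ytest i‖ := by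
      rw [hdecomp]; exact norm_add₃_le
    have hc : ‖yt (j i) - ytest i‖ ≤ εtest := by
      rw [norm_sub_rev]; exact hy
    have hA1 : ‖g (xtest i) - g (xt (j i))‖ ^ 2 ≤ Cg ^ 2 * ‖xtest i - xt (j i)‖ ^ 2 := by
      nlinarith [norm_nonneg (g (xtest i) - g (xt (j i))), norm_nonneg (xtest i - xt (j i))]
    have hA2 : Cg ^ 2 * ‖xtest i - xt (j i)‖ ^ 2 ≤ Cg ^ 2 * εtest ^ 2 := by
      apply mul_le_mul_of_nonneg_left _ (sq_nonneg Cg)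
      nlinarith [norm_nonneg (xtest i - xt (j i))]
    have hA : ‖g (xtest i) - g (xt (j i))‖ ^ 2 ≤ Cg ^ 2 * εtest ^ 2 := hA1.trans hA2
    have hs : ‖g (xtest i) - ytest i‖ ^ 2 ≤
        (‖g (xtest i) - g (xt (j i))‖ + ‖g (xt (j i)) - yt (j i)‖ + ‖yt (j i) - ytest i‖) ^ 2 := by
      nlinarith [norm_nonneg (g (xtest i) - ytest i), norm_nonneg (g (xtest i) - g (xt (j i))),
        norm_nonneg (g (xt (j i)) - yt (j i)), norm_nonneg (yt (j i) - ytest i)]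
    have hcc : ‖yt (j i) - ytest i‖ ^ 2 ≤ εtest ^ 2 := by
      nlinarith [norm_nonneg (yt (j i) - ytest i)]
    nlinarith [hs, hA, hcc,
      sq_nonneg (‖g (xtest i) - g (xt (j i))‖ - ‖g (xt (j i)) - yt (j i)‖),
      sq_nonneg (‖g (xtest i) - g (xt (j i))‖ - ‖yt (j i) - ytest i‖),
      sq_nonneg (‖g (xt (j i)) - yt (j i)‖ - ‖yt (j i) - ytest i‖)]
  have h2 : ∑ i : Fin Ntest, ‖g (xt (j i)) - yt (j i)‖ ^ 2 ≤
      ∑ i : Fin N, ‖g (xt i) - yt i‖ ^ 2 := by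
    have himg : ∑ k ∈ Finset.univ.image j, ‖g (xt k) - yt k‖ ^ 2
        = ∑ i : Fin Ntest, ‖g (xt (j i)) - yt (j i)‖ ^ 2 :=
      Finset.sum_image (f := fun k => ‖g (xt k) - yt k‖ ^ 2) (fun a _ b _ h => hj h)
    rw [← himg]
    exact Finset.sum_le_sum_of_subset_of_nonneg (Finset.subset_univ _)
      (fun _ _ _ => sq_nonneg _)
  have hsum : ∑ i, ‖g (xtest i) - ytest i‖ ^ 2 ≤
      Ntest * (3 * (Cg ^ 2 + 1) * εtest ^ 2) + 3 * ∑ i : Fin N, ‖g (xt i) - yt i‖ ^ 2 := by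
    calc ∑ i, ‖g (xtest i) - ytest i‖ ^ 2
        ≤ ∑ i : Fin Ntest, (3 * (Cg ^ 2 + 1) * εtest ^ 2 + 3 * ‖g (xt (j i)) - yt (j i)‖ ^ 2) :=
          Finset.sum_le_sum fun i _ => key i
      _ = Ntest * (3 * (Cg ^ 2 + 1) * εtest ^ 2)
            + 3 * ∑ i : Fin Ntest, ‖g (xt (j i)) - yt (j i)‖ ^ 2 := by
          rw [Finset.sum_add_distrib, Finset.sum_const, ← Finset.mul_sum]
          simp [mul_comm]
      _ ≤ _ := by linarith
  have hrhs : (3 * N / Ntest : ℝ) * ((1 / N : ℝ) * ∑ i, ‖g (xt i) - yt i‖ ^ 2) =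
      (1 / Ntest : ℝ) * (3 * ∑ i, ‖g (xt i) - yt i‖ ^ 2) := by
    field_simp
  rw [hrhs]
  have h3 : (1 / Ntest : ℝ) * ∑ i, ‖g (xtest i) - ytest i‖ ^ 2 ≤
      (1 / Ntest : ℝ) * (Ntest * (3 * (Cg ^ 2 + 1) * εtest ^ 2)
        + 3 * ∑ i : Fin N, ‖g (xt i) - yt i‖ ^ 2) := by
    apply mul_le_mul_of_nonneg_left hsum
    positivity
  calc (1 / Ntest : ℝ) * ∑ i, ‖g (xtest i) - ytest i‖ ^ 2 ≤ _ := h3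
    _ = 3 * (Cg ^ 2 + 1) * εtest ^ 2
          + (1 / Ntest : ℝ) * (3 * ∑ i : Fin N, ‖g (xt i) - yt i‖ ^ 2) := by
        field_simp
end
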